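/- Suppose ‖f‖_p ≤ K · ψ(p) for all p in a set S ⊂ [1,∞), where K > 0 and ψ : S → (0,∞). Define ν(p) = p · ln ψ(p) and its Young–Fenchel transform ν*(y) = sup_{p ∈ S} (p·y − ν(p)). Then for every t > 0, T[f](t) ≤ exp(−ν*(ln(t/K))). -/

import Mathlib

/-!
Chebyshev–Markov at each exponent `p ∈ S` gives
`T[f](t) ≤ (‖f‖_p / t)^p ≤ (K ψ(p) / t)^p = exp(-(p ln(t/K) - ν(p)))`.
Since `exp ∘ neg` is antitone, the supremum defining `ν*(ln(t/K))` becomes the infimum over `p ∈ S`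
of these bounds.
-/

open MeasureTheory Set

theorem meas_le_norm_le_ofReal_div_rpow {α E : Type*} [MeasurableSpace α] [NormedAddCommGroup E]
    {μ : Measure α} {f : α → E} (hf : AEStronglyMeasurable f μ) {p C t : ℝ} (hp : 0 < p)
    (hC : 0 ≤ C) (ht : 0 < t) (hfC : eLpNorm f (ENNReal.ofReal p) μ ≤ ENNReal.ofReal C) :
    μ {x | t ≤ ‖f x‖} ≤ ENNReal.ofReal ((C / t) ^ p) := by
  have hset : {x | t ≤ ‖f x‖} = {x | ENNReal.ofReal t ≤ ‖f x‖ₑ} := by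
    ext x
    simp only [mem_ofPred_eq, ← ofReal_norm, ENNReal.ofReal_le_ofReal_iff (norm_nonneg _)]
  have hp' : (ENNReal.ofReal p).toReal = p := ENNReal.toReal_ofReal hp.le
  rw [hset]
  calc μ {x | ENNReal.ofReal t ≤ ‖f x‖ₑ}
      ≤ (ENNReal.ofReal t)⁻¹ ^ p * eLpNorm f (ENNReal.ofReal p) μ ^ p := by
        simpa only [hp'] using meas_ge_le_mul_pow_eLpNorm_enorm μ (ENNReal.ofReal_pos.2 hp).ne'
          ENNReal.ofReal_ne_top hf (ENNReal.ofReal_pos.2 ht).ne' (by simp)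
    _ ≤ (ENNReal.ofReal t)⁻¹ ^ p * ENNReal.ofReal C ^ p := by gcongr
    _ = ENNReal.ofReal ((C / t) ^ p) := by
        rw [Real.div_rpow hC ht.le, ENNReal.ofReal_div_of_pos (by positivity),
          ← ENNReal.ofReal_rpow_of_nonneg hC hp.le, ← ENNReal.ofReal_rpow_of_nonneg ht.le hp.le,
          div_eq_mul_inv, mul_comm, ENNReal.inv_rpow]

theorem mul_div_rpow_eq_exp_neg {K ψ t : ℝ} (hK : 0 < K) (hψ : 0 < ψ) (ht : 0 < t) (p : ℝ) :
    (K * ψ / t) ^ p = Real.exp (-(p * Real.log (t / K) - p * Real.log ψ)) := by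
  rw [Real.rpow_def_of_pos (by positivity), Real.log_div (by positivity) ht.ne',
    Real.log_mul hK.ne' hψ.ne', Real.log_div ht.ne' hK.ne']
  ring_nf

/-- If `‖f‖_p ≤ K ψ(p)` for `p ∈ S`, then with `ν(p) = p ln ψ(p)` and the Young–Fenchel
transform `ν*(y) = sup_{p∈S} (p y − ν(p))`, one has `T[f](t) ≤ exp(−ν*(ln(t/K)))`,
expressed equivalently as an infimum over `p ∈ S` of `exp(−(p·ln(t/K) − ν(p)))`. -/
theorem tail_from_grand_lebesgue (d : ℕ) (f : EuclideanSpace ℝ (Fin d) → ℝ)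
    (hf : Measurable f) (S : Set ℝ) (hS : S ⊆ Ici 1) (ψ : ℝ → ℝ)
    (hψ : ∀ p ∈ S, 0 < ψ p) (K : ℝ) (hK : 0 < K)
    (hbound : ∀ p ∈ S,
      eLpNorm f (ENNReal.ofReal p) (volume : Measure (EuclideanSpace ℝ (Fin d)))
        ≤ ENNReal.ofReal (K * ψ p))
    (t : ℝ) (ht : 0 < t) :
    volume {x : EuclideanSpace ℝ (Fin d) | t ≤ |f x|}
      ≤ ⨅ p ∈ S, ENNReal.ofReal
          (Real.exp (-(p * Real.log (t / K) - p * Real.log (ψ p)))) := by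
  refine le_iInf₂ fun p hp => ?_
  have hp0 : 0 < p := zero_lt_one.trans_le (hS hp)
  rw [← mul_div_rpow_eq_exp_neg hK (hψ p hp) ht]
  simpa only [Real.norm_eq_abs] using meas_le_norm_le_ofReal_div_rpow hf.aestronglyMeasurable
    hp0 (mul_pos hK (hψ p hp)).le ht (hbound p hp)
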